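/- If B is a binary doubly even code of length 36 with minimum weight at least 16 and dual minimum weight at least 4, and C is a self-dual Z_4-code with residue code C^(1) = B, then A_4(C) is an extremal unimodular lattice in dimension 36, i.e., has minimum norm 4. -/

import Mathlib

open scoped Classical

/-- Hamming weight of a binary vector. -/
noncomputable def wt {n : ℕ} (c : Fin n → ZMod 2) : ℕ :=
  (Finset.univ.filter fun i => c i ≠ 0).card

/-- Reduction mod 2 of a vector over `ZMod 4`. -/
def res {n : ℕ} (c : Fin n → ZMod 4) : Fin n → ZMod 2 :=
  fun i => ZMod.castHom (by norm_num : (2:ℕ) ∣ 4) (ZMod 2) (c i)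

/-- The residue code of a `ZMod 4`-code. -/
def residueCode {n : ℕ} (C : Submodule (ZMod 4) (Fin n → ZMod 4)) :
    Set (Fin n → ZMod 2) :=
  {y | ∃ c ∈ C, y = res c}

/-- The lattice `A₄(C) = (1/2){x ∈ ℤⁿ : x mod 4 ∈ C}`. -/
def A4 {n : ℕ} (C : Submodule (ZMod 4) (Fin n → ZMod 4)) : Set (Fin n → ℝ) :=
  {v | ∃ x : Fin n → ℤ, (∀ i, v i = (x i : ℝ) / 2) ∧
    (fun i => (x i : ZMod 4)) ∈ C}

/-- The dual of a set of vectors in `ℝⁿ`. -/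
def dualLattice {n : ℕ} (L : Set (Fin n → ℝ)) : Set (Fin n → ℝ) :=
  {v | ∀ w ∈ L, ∃ m : ℤ, ∑ i, v i * w i = (m : ℝ)}

/-! An integer vector `x` with `x mod 4 = c ∈ C` has `∑ xᵢ² ≥ d_E(c)`, and `∑ xᵢ² ≥ 16` when
`c = 0`, so the minimum norm of `A₄(C)` is at least `min 4 (d_E(C)/4)`. A codeword with nonzero
residue has Euclidean weight at least the weight of its residue, hence at least `16`. A nonzero
codeword with zero residue is `2t` for a binary `t ≠ 0`; self-orthogonality of `C` makes `t`
orthogonal to the residue code `B`, so `wt t ≥ 4` and `d_E(2t) = 4 wt t ≥ 16`. Self-duality of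
`A₄(C)` follows from that of `C` because `2eᵢ ∈ A₄(C)` and inner products in `A₄(C)` are
`(x · y)/4`. -/

def euclideanWeight {N : ℕ} (a : ZMod N) : ℤ := a.valMinAbs ^ 2

def euclideanNorm {N n : ℕ} (c : Fin n → ZMod N) : ℤ := ∑ i, euclideanWeight (c i)

theorem euclideanWeight_intCast_le_sq {N : ℕ} [NeZero N] (t : ℤ) :
    euclideanWeight (t : ZMod N) ≤ t ^ 2 :=
  Int.natAbs_le_iff_sq_le.mp <| ZMod.natAbs_min_of_le_div_two N _ t (ZMod.coe_valMinAbs _)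
    (ZMod.natAbs_valMinAbs_le _)

theorem euclideanNorm_le_sum_sq {N n : ℕ} [NeZero N] (x : Fin n → ℤ) :
    euclideanNorm (fun i => (x i : ZMod N)) ≤ ∑ i, x i ^ 2 :=
  Finset.sum_le_sum fun i _ => euclideanWeight_intCast_le_sq (x i)

theorem sq_le_sum_sq_of_intCast_eq_zero {N n : ℕ} {x : Fin n → ℤ} (hx : x ≠ 0)
    (hN : (fun i => (x i : ZMod N)) = 0) : (N : ℤ) ^ 2 ≤ ∑ i, x i ^ 2 := by
  obtain ⟨i, hi⟩ := Function.ne_iff.mp hx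
  have hdvd : (N : ℤ) ∣ x i := (ZMod.intCast_zmod_eq_zero_iff_dvd _ N).mp (congrFun hN i)
  calc (N : ℤ) ^ 2 ≤ x i ^ 2 := Int.natAbs_le_iff_sq_le.mp (Int.natAbs_le_of_dvd_ne_zero hdvd hi)
    _ ≤ ∑ i, x i ^ 2 := Finset.single_le_sum (fun j _ => sq_nonneg (x j)) (Finset.mem_univ i)

theorem wt_eq_sum_ite {n : ℕ} (t : Fin n → ZMod 2) :
    (wt t : ℤ) = ∑ i, if t i ≠ 0 then 1 else 0 := by
  rw [wt, Finset.card_filter]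
  push_cast
  rfl

theorem wt_res_le_euclideanNorm {n : ℕ} (c : Fin n → ZMod 4) :
    (wt (res c) : ℤ) ≤ euclideanNorm c := by
  have key : ∀ a : ZMod 4,
      (if ZMod.castHom (by norm_num : (2:ℕ) ∣ 4) (ZMod 2) a ≠ 0 then 1 else 0) ≤
        euclideanWeight a := by
    decide
  rw [wt_eq_sum_ite]
  exact Finset.sum_le_sum fun i _ => key (c i)

def twoMul : ZMod 2 →+ ZMod 4 where
  toFun a := 2 * (a.val : ZMod 4)
  map_zero' := by decide
  map_add' := by decide

theorem twoMul_injective : Function.Injective twoMul := by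
  decide

theorem exists_twoMul_of_res_eq_zero {n : ℕ} {c : Fin n → ZMod 4} (hc : res c = 0) :
    ∃ t : Fin n → ZMod 2, c = fun i => twoMul (t i) := by
  have key : ∀ a : ZMod 4,
      ZMod.castHom (by norm_num : (2:ℕ) ∣ 4) (ZMod 2) a = 0 → ∃ b, a = twoMul b := by
    decide
  choose t ht using fun i => key (c i) (congrFun hc i)
  exact ⟨t, funext ht⟩

theorem sum_twoMul_mul {n : ℕ} (t : Fin n → ZMod 2) (c : Fin n → ZMod 4) :
    ∑ i, twoMul (t i) * c i = twoMul (∑ i, t i * res c i) := by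
  have key : ∀ (a : ZMod 2) (b : ZMod 4),
      twoMul a * b = twoMul (a * ZMod.castHom (by norm_num : (2:ℕ) ∣ 4) (ZMod 2) b) := by
    decide
  rw [map_sum]
  exact Finset.sum_congr rfl fun i _ => key (t i) (c i)

theorem euclideanNorm_twoMul {n : ℕ} (t : Fin n → ZMod 2) :
    euclideanNorm (fun i => twoMul (t i)) = 4 * wt t := by
  have key : ∀ a : ZMod 2, euclideanWeight (twoMul a) = 4 * if a ≠ 0 then 1 else 0 := by
    decide
  rw [wt_eq_sum_ite, Finset.mul_sum]
  exact Finset.sum_congr rfl fun i _ => key (t i)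

theorem min_le_euclideanNorm {n d₁ d₂ : ℕ} {C : Submodule (ZMod 4) (Fin n → ZMod 4)}
    (horth : ∀ x ∈ C, ∀ y ∈ C, ∑ i, x i * y i = 0)
    (hd₁ : ∀ b ∈ residueCode C, b ≠ 0 → d₁ ≤ wt b)
    (hd₂ : ∀ t : Fin n → ZMod 2, (∀ b ∈ residueCode C, ∑ i, t i * b i = 0) → t ≠ 0 → d₂ ≤ wt t)
    {c : Fin n → ZMod 4} (hc : c ∈ C) (hc0 : c ≠ 0) :
    (min d₁ (4 * d₂) : ℤ) ≤ euclideanNorm c := by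
  by_cases hres : res c = 0
  · obtain ⟨t, rfl⟩ := exists_twoMul_of_res_eq_zero hres
    have ht0 : t ≠ 0 := by
      rintro rfl
      exact hc0 (funext fun _ => map_zero twoMul)
    have ht : ∀ b ∈ residueCode C, ∑ i, t i * b i = 0 := by
      rintro b ⟨c', hc', rfl⟩
      apply twoMul_injective
      rw [← sum_twoMul_mul, map_zero]
      exact horth _ hc c' hc'
    have hwt := hd₂ t ht ht0
    rw [euclideanNorm_twoMul]
    omega
  · have hwt := hd₁ (res c) ⟨c, hc, rfl⟩ hres
    have hle := wt_res_le_euclideanNorm c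
    omega

theorem sum_half_mul_half {n : ℕ} (x y : Fin n → ℤ) :
    ∑ i, (x i : ℝ) / 2 * ((y i : ℝ) / 2) = ((∑ i, x i * y i : ℤ) : ℝ) / 4 := by
  push_cast
  rw [Finset.sum_div]
  exact Finset.sum_congr rfl fun i _ => by ring

theorem exists_intCast_div_four_eq_iff (k : ℤ) :
    (∃ m : ℤ, (k : ℝ) / 4 = m) ↔ (k : ZMod 4) = 0 := by
  rw [ZMod.intCast_zmod_eq_zero_iff_dvd]
  constructor
  · rintro ⟨m, hm⟩
    rw [div_eq_iff four_ne_zero] at hm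
    exact ⟨m, by exact_mod_cast (by linarith : (k : ℝ) = 4 * m)⟩
  · rintro ⟨m, rfl⟩
    exact ⟨m, by push_cast; ring⟩

theorem four_le_norm_of_mem_A4 {n : ℕ} {C : Submodule (ZMod 4) (Fin n → ZMod 4)}
    (hC : ∀ c ∈ C, c ≠ 0 → 16 ≤ euclideanNorm c) {v : Fin n → ℝ} (hv : v ∈ A4 C) (hv0 : v ≠ 0) :
    4 ≤ ∑ i, v i * v i := by
  obtain ⟨x, hvx, hxC⟩ := hv
  obtain rfl : v = fun i => (x i : ℝ) / 2 := funext hvx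
  have hx0 : x ≠ 0 := by
    rintro rfl
    exact hv0 (funext fun i => by simp)
  have h16 : 16 ≤ ∑ i, x i ^ 2 := by
    by_cases hc : (fun i => (x i : ZMod 4)) = 0
    · simpa using sq_le_sum_sq_of_intCast_eq_zero hx0 hc
    · exact (hC _ hxC hc).trans (euclideanNorm_le_sum_sq x)
  rw [sum_half_mul_half]
  have h16' : (16 : ℝ) ≤ ((∑ i, x i * x i : ℤ) : ℝ) := by
    simp_rw [← sq]
    exact_mod_cast h16
  linarith

theorem single_two_mem_A4 {n : ℕ} (C : Submodule (ZMod 4) (Fin n → ZMod 4)) (j : Fin n) :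
    Pi.single j 2 ∈ A4 C := by
  have h0 : (fun i => ((Pi.single j 4 : Fin n → ℤ) i : ZMod 4)) = 0 := by
    ext i
    rcases eq_or_ne i j with rfl | h
    · simp only [Pi.single_eq_same, Int.cast_ofNat, Pi.zero_apply]; rfl
    · simp [h]
  refine ⟨Pi.single j 4, fun i => ?_, h0 ▸ C.zero_mem⟩
  rcases eq_or_ne i j with rfl | h
  · norm_num
  · simp [h]

theorem A4_subset_dualLattice {n : ℕ} {C : Submodule (ZMod 4) (Fin n → ZMod 4)}
    (horth : ∀ x ∈ C, ∀ y ∈ C, ∑ i, x i * y i = 0) : A4 C ⊆ dualLattice (A4 C) := by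
  rintro v ⟨x, hvx, hxC⟩ w ⟨y, hwy, hyC⟩
  simp only [hvx, hwy, sum_half_mul_half, exists_intCast_div_four_eq_iff]
  push_cast
  exact horth _ hxC _ hyC

theorem dualLattice_subset_A4 {n : ℕ} {C : Submodule (ZMod 4) (Fin n → ZMod 4)}
    (hC : ∀ x : Fin n → ZMod 4, (∀ c ∈ C, ∑ i, x i * c i = 0) → x ∈ C) :
    dualLattice (A4 C) ⊆ A4 C := by
  intro v hv
  have hcoord : ∀ j, ∃ m : ℤ, v j = m / 2 := fun j => by
    obtain ⟨m, hm⟩ := hv _ (single_two_mem_A4 C j)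
    refine ⟨m, ?_⟩
    simp only [Pi.single_apply, mul_ite, mul_zero, Finset.sum_ite_eq', Finset.mem_univ,
      if_true] at hm
    linarith
  choose x hx using hcoord
  refine ⟨x, hx, hC _ fun c hc => ?_⟩
  let y : Fin n → ℤ := fun i => (c i).cast
  have hyc : (fun i => (y i : ZMod 4)) = c := funext fun i => ZMod.intCast_zmod_cast (c i)
  obtain ⟨m, hm⟩ := hv _ ⟨y, fun i => rfl, hyc ▸ hc⟩
  simp only [hx, sum_half_mul_half] at hm
  have hdot := (exists_intCast_div_four_eq_iff _).mp ⟨m, hm⟩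
  push_cast at hdot
  simpa only [← hyc] using hdot

theorem stmt10_general (B : Submodule (ZMod 2) (Fin 36 → ZMod 2))
    (hmin : ∀ c ∈ B, c ≠ 0 → 16 ≤ wt c)
    (hdualB : ∀ x : Fin 36 → ZMod 2,
      (∀ c ∈ B, ∑ i, x i * c i = 0) → x ≠ 0 → 4 ≤ wt x)
    (C : Submodule (ZMod 4) (Fin 36 → ZMod 4))
    (hsd : ∀ x : Fin 36 → ZMod 4, x ∈ C ↔ ∀ c ∈ C, ∑ i, x i * c i = 0)
    (hres : residueCode C = (B : Set (Fin 36 → ZMod 2))) :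
    A4 C = dualLattice (A4 C) ∧
      sInf {r : ℝ | ∃ v ∈ A4 C, v ≠ 0 ∧ ∑ i, v i * v i = r} = 4 := by
  have horth : ∀ x ∈ C, ∀ y ∈ C, ∑ i, x i * y i = 0 := fun x hx => (hsd x).mp hx
  have hB : ∀ b, b ∈ residueCode C ↔ b ∈ B := fun b => by rw [hres]; rfl
  have hE : ∀ c ∈ C, c ≠ 0 → 16 ≤ euclideanNorm c := fun c hc hc0 => by
    simpa using min_le_euclideanNorm (d₁ := 16) (d₂ := 4) horth
      (fun b hb => hmin b ((hB b).mp hb))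
      (fun t ht => hdualB t fun b hb => ht b ((hB b).mpr hb)) hc hc0
  refine ⟨(A4_subset_dualLattice horth).antisymm (dualLattice_subset_A4 fun x => (hsd x).mpr), ?_⟩
  refine IsLeast.csInf_eq ⟨⟨Pi.single 0 2, single_two_mem_A4 C 0, by simp, ?_⟩, ?_⟩
  · rw [Fintype.sum_eq_single 0 fun i hi => by simp [hi]]
    norm_num
  · rintro r ⟨v, hv, hv0, rfl⟩
    exact four_le_norm_of_mem_A4 hE hv hv0

theorem stmt10 (B : Submodule (ZMod 2) (Fin 36 → ZMod 2))
    (hde : ∀ c ∈ B, 4 ∣ wt c)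
    (hmin : ∀ c ∈ B, c ≠ 0 → 16 ≤ wt c)
    (hdualB : ∀ x : Fin 36 → ZMod 2,
      (∀ c ∈ B, ∑ i, x i * c i = 0) → x ≠ 0 → 4 ≤ wt x)
    (C : Submodule (ZMod 4) (Fin 36 → ZMod 4))
    (hsd : ∀ x : Fin 36 → ZMod 4, x ∈ C ↔ ∀ c ∈ C, ∑ i, x i * c i = 0)
    (hres : residueCode C = (B : Set (Fin 36 → ZMod 2))) :
    A4 C = dualLattice (A4 C) ∧
      sInf {r : ℝ | ∃ v ∈ A4 C, v ≠ 0 ∧ ∑ i, v i * v i = r} = 4 :=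
  stmt10_general B hmin hdualB C hsd hres
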